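/- arXiv:2005.13149 — 6 statements merged into one kernel-verified Lean document; each statement's English description precedes it below -/
import Mathlib

section
/- Let X and Y be finite nonempty types and let p : X × Y → ℝ be a probability mass function (p ≥ 0 and ∑_{x,y} p(x,y) = 1), with marginals p_X(x) = ∑_y p(x,y) and p_Y(y) = ∑_x p(x,y), and mutual information I(X;Y) = ∑_{(x,y) : p(x,y) > 0} p(x,y) · log( p(x,y) / (p_X(x) · p_Y(y)) ). Let q : X × Y → ℝ satisfy q ≥ 0, ∑_x q(x,y) = 1 for every y ∈ Y, and q(x,y) > 0 whenever p(x,y) > 0. Then I(X;Y) ≥ ∑_{(x,y) : p(x,y) > 0} p(x,y) · log( q(x,y) / p_X(x) ). (This is the normalized Barber–Agakov lower bound on mutual information.) -/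
open scoped BigOperators

/-- The normalized Barber–Agakov lower bound on mutual information (finite case). -/
theorem barber_agakov_normalized (X Y : Type*) [Fintype X] [Fintype Y]
    [Nonempty X] [Nonempty Y]
    (p : X × Y → ℝ) (hp0 : ∀ z, 0 ≤ p z) (hp1 : ∑ z, p z = 1)
    (q : X × Y → ℝ) (hq0 : ∀ z, 0 ≤ q z)
    (hq1 : ∀ y, ∑ x, q (x, y) = 1)
    (hqpos : ∀ z, 0 < p z → 0 < q z) :
    ∑ z ∈ Finset.univ.filter (fun z => 0 < p z),
        p z * Real.log (q z / ∑ y, p (z.1, y)) ≤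
      ∑ z ∈ Finset.univ.filter (fun z => 0 < p z),
        p z * Real.log (p z / ((∑ y, p (z.1, y)) * (∑ x, p (x, z.2)))) := by
  set S := Finset.univ.filter (fun z : X × Y => 0 < p z) with hS
  have hmem : ∀ z ∈ S, 0 < p z := fun z hz => (Finset.mem_filter.mp hz).2
  have hpX : ∀ z ∈ S, 0 < ∑ y, p (z.1, y) := by
    intro z hz
    calc (0:ℝ) < p (z.1, z.2) := by simpa using hmem z hz
    _ ≤ ∑ y, p (z.1, y) :=
        Finset.single_le_sum (fun y _ => hp0 _) (Finset.mem_univ z.2)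
  have hpY : ∀ z ∈ S, 0 < ∑ x, p (x, z.2) := by
    intro z hz
    calc (0:ℝ) < p (z.1, z.2) := by simpa using hmem z hz
    _ ≤ ∑ x, p (x, z.2) :=
        Finset.single_le_sum (f := fun x => p (x, z.2)) (fun x _ => hp0 _) (Finset.mem_univ z.1)
  rw [← sub_nonneg, ← Finset.sum_sub_distrib]
  have key : ∀ z ∈ S,
      p z * Real.log (p z / ((∑ y, p (z.1, y)) * (∑ x, p (x, z.2)))) -
        p z * Real.log (q z / ∑ y, p (z.1, y)) =
      p z * Real.log (p z / ((∑ x, p (x, z.2)) * q z)) := by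
    intro z hz
    have h1 := hmem z hz
    have h2 := hqpos z h1
    have h3 := hpX z hz
    have h4 := hpY z hz
    rw [← mul_sub,
      Real.log_div h1.ne' (by positivity),
      Real.log_div h2.ne' h3.ne',
      Real.log_div h1.ne' (by positivity),
      Real.log_mul h3.ne' h4.ne',
      Real.log_mul h4.ne' h2.ne']
    ring
  rw [Finset.sum_congr rfl key]
  have step : ∀ z ∈ S, p z - (∑ x, p (x, z.2)) * q z ≤
      p z * Real.log (p z / ((∑ x, p (x, z.2)) * q z)) := by
    intro z hz
    have h1 := hmem z hz
    have h2 := hqpos z h1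
    have h4 := hpY z hz
    set c := (∑ x, p (x, z.2)) * q z with hc
    have hcpos : 0 < c := mul_pos h4 h2
    have hlog : Real.log (c / p z) ≤ c / p z - 1 :=
      Real.log_le_sub_one_of_pos (by positivity)
    have : 1 - c / p z ≤ Real.log (p z / c) := by
      have := Real.log_div hcpos.ne' h1.ne'
      nlinarith [Real.log_div h1.ne' hcpos.ne', Real.log_div hcpos.ne' h1.ne']
    nlinarith [mul_le_mul_of_nonneg_left this h1.le,
      mul_div_cancel₀ c h1.ne']
  have hsum := Finset.sum_le_sum step
  refine le_trans ?_ hsum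
  have hSp : ∑ z ∈ S, p z = 1 := by
    rw [← hp1]
    apply Finset.sum_subset (Finset.subset_univ S)
    intro z _ hz
    have : ¬ 0 < p z := by
      simpa [hS] using hz
    linarith [hp0 z]
  have hSc : ∑ z ∈ S, (∑ x, p (x, z.2)) * q z ≤ 1 := by
    have hle : ∑ z ∈ S, (∑ x, p (x, z.2)) * q z ≤
        ∑ z : X × Y, (∑ x, p (x, z.2)) * q z := by
      apply Finset.sum_le_sum_of_subset_of_nonneg (Finset.subset_univ S)
      intro z _ _
      exact mul_nonneg (Finset.sum_nonneg fun x _ => hp0 _) (hq0 z)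
    have heq : ∑ z : X × Y, (∑ x, p (x, z.2)) * q z = 1 := by
      rw [Fintype.sum_prod_type_right]
      have : ∀ y : Y, ∑ x, (∑ x', p (x', y)) * q (x, y) = ∑ x', p (x', y) := by
        intro y
        rw [← Finset.mul_sum, hq1 y, mul_one]
      rw [Finset.sum_congr rfl fun y _ => this y, ← hp1, Fintype.sum_prod_type_right]
    linarith [hle, heq.le]
  rw [Finset.sum_sub_distrib, hSp]
  linarith
end

section
/- Let X and Y be finite nonempty types and let p : X × Y → ℝ be a probability mass function (p ≥ 0 and ∑_{x,y} p(x,y) = 1), with marginals p_X(x) = ∑_y p(x,y) and p_Y(y) = ∑_x p(x,y), and mutual information I(X;Y) = ∑_{(x,y) : p(x,y) > 0} p(x,y) · log( p(x,y) / (p_X(x) · p_Y(y)) ). Let f : X × Y → ℝ be any function and define the partition function Z(y) = ∑_x p_X(x) · exp(f(x,y)). Then I(X;Y) ≥ ∑_{x,y} p(x,y) · ( f(x,y) − log Z(y) ). (This is the unnormalized Barber–Agakov lower bound.) -/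
open scoped BigOperators

theorem ba_aux {X Y : Type*} [Fintype X] [Fintype Y]
    (p : X × Y → ℝ) (pX : X → ℝ) (pY : Y → ℝ) (Z : Y → ℝ)
    (f : X × Y → ℝ)
    (hp0 : ∀ z, 0 ≤ p z) (hp1 : ∑ z, p z = 1)
    (hpX : ∀ x, pX x = ∑ y, p (x, y))
    (hpY : ∀ y, pY y = ∑ x, p (x, y))
    (hZ : ∀ y, Z y = ∑ x, pX x * Real.exp (f (x, y))) :
    ∑ z, p z * (f z - Real.log (Z z.2)) ≤
      ∑ z ∈ Finset.univ.filter (fun z => 0 < p z),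
        p z * Real.log (p z / (pX z.1 * pY z.2)) := by
  classical
  have hpX0 : ∀ x, 0 ≤ pX x := fun x => (hpX x) ▸ Finset.sum_nonneg fun y _ => hp0 _
  have hpY0 : ∀ y, 0 ≤ pY y := fun y => (hpY y) ▸ Finset.sum_nonneg fun x _ => hp0 _
  have hpXsum : ∑ x, pX x = 1 := by
    simp only [hpX]; rw [← hp1, ← Fintype.sum_prod_type]
  have hpYsum : ∑ y, pY y = 1 := by
    simp only [hpY]; rw [← hp1, ← Fintype.sum_prod_type_right]
  have hZpos : ∀ y, 0 < Z y := by
    intro y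
    obtain ⟨x, hx⟩ : ∃ x, (0:ℝ) < pX x := by
      by_contra h
      push_neg at h
      have : ∑ x, pX x ≤ 0 := Finset.sum_nonpos fun x _ => h x
      linarith [hpXsum]
    rw [hZ]
    exact Finset.sum_pos' (fun i _ => mul_nonneg (hpX0 i) (Real.exp_pos _).le)
      ⟨x, Finset.mem_univ x, mul_pos hx (Real.exp_pos _)⟩
  set q : X × Y → ℝ := fun z => pX z.1 * Real.exp (f z) * pY z.2 / Z z.2 with hqdef
  have hq0 : ∀ z, 0 ≤ q z := fun z =>
    div_nonneg (mul_nonneg (mul_nonneg (hpX0 _) (Real.exp_pos _).le) (hpY0 _)) (hZpos _).le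
  have hqsum : ∑ z, q z = 1 := by
    rw [Fintype.sum_prod_type_right]
    have : ∀ y : Y, ∑ x, q (x, y) = pY y := by
      intro y
      have : ∑ x, q (x, y) = (∑ x, pX x * Real.exp (f (x, y))) * (pY y / Z y) := by
        rw [Finset.sum_mul]
        refine Finset.sum_congr rfl fun x _ => ?_
        simp only [hqdef]
        ring
      rw [this, ← hZ y, mul_comm, div_mul_eq_mul_div, mul_div_assoc,
        div_self (hZpos y).ne', mul_one]
    simp_rw [this]
    exact hpYsum
  set S := Finset.univ.filter (fun z : X × Y => 0 < p z) with hS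
  have hmem : ∀ z ∈ S, 0 < p z := fun z hz => (Finset.mem_filter.mp hz).2
  have hLHS : ∑ z, p z * (f z - Real.log (Z z.2)) = ∑ z ∈ S, p z * (f z - Real.log (Z z.2)) := by
    refine (Finset.sum_filter_of_ne fun z _ hne => ?_).symm
    rcases lt_or_eq_of_le (hp0 z) with h | h
    · exact h
    · exact absurd (by rw [← h, zero_mul]) hne
  have hpSsum : ∑ z ∈ S, p z = 1 := by
    rw [← hp1]
    refine Finset.sum_filter_of_ne fun z _ hne => ?_
    exact lt_of_le_of_ne (hp0 z) (Ne.symm hne)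
  rw [hLHS, ← sub_nonneg, ← Finset.sum_sub_distrib]
  have key : ∀ z ∈ S, p z - q z ≤ p z * Real.log (p z / (pX z.1 * pY z.2)) - p z * (f z - Real.log (Z z.2)) := by
    intro z hz
    have hpz : 0 < p z := hmem z hz
    have hpXz : 0 < pX z.1 := by
      rw [hpX]
      exact lt_of_lt_of_le hpz (Finset.single_le_sum (fun y _ => hp0 (z.1, y)) (Finset.mem_univ z.2))
    have hpYz : 0 < pY z.2 := by
      rw [hpY]
      exact lt_of_lt_of_le hpz (Finset.single_le_sum (fun x _ => hp0 (x, z.2)) (Finset.mem_univ z.1))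
    have hqz : 0 < q z :=
      div_pos (mul_pos (mul_pos hpXz (Real.exp_pos _)) hpYz) (hZpos _)
    have heq : p z * Real.log (p z / (pX z.1 * pY z.2)) - p z * (f z - Real.log (Z z.2))
        = p z * Real.log (p z / q z) := by
      rw [Real.log_div hpz.ne' (mul_pos hpXz hpYz).ne',
          Real.log_div hpz.ne' hqz.ne',
          hqdef]
      simp only
      rw [Real.log_div (mul_pos (mul_pos hpXz (Real.exp_pos _)) hpYz).ne' (hZpos _).ne',
          Real.log_mul (mul_pos hpXz (Real.exp_pos _)).ne' hpYz.ne',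
          Real.log_mul hpXz.ne' (Real.exp_pos _).ne',
          Real.log_mul hpXz.ne' hpYz.ne', Real.log_exp]
      ring
    rw [heq]
    have hlog : Real.log (q z / p z) ≤ q z / p z - 1 :=
      Real.log_le_sub_one_of_pos (div_pos hqz hpz)
    have : Real.log (p z / q z) = - Real.log (q z / p z) := by
      rw [← Real.log_inv, inv_div]
    have h2 : 1 - q z / p z ≤ Real.log (p z / q z) := by rw [this]; linarith
    calc p z - q z = p z * (1 - q z / p z) := by field_simp
      _ ≤ p z * Real.log (p z / q z) := by
          exact mul_le_mul_of_nonneg_left h2 hpz.le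
  calc (0:ℝ) = 1 - ∑ z, q z := by rw [hqsum]; ring
    _ ≤ 1 - ∑ z ∈ S, q z :=
        sub_le_sub_left (Finset.sum_le_sum_of_subset_of_nonneg (Finset.filter_subset _ _)
          fun z _ _ => hq0 z) 1
    _ = ∑ z ∈ S, (p z - q z) := by rw [Finset.sum_sub_distrib, hpSsum]
    _ ≤ _ := Finset.sum_le_sum key

/-- The unnormalized Barber–Agakov lower bound on mutual information (finite case). -/
theorem barber_agakov_unnormalized (X Y : Type*) [Fintype X] [Fintype Y]
    [Nonempty X] [Nonempty Y]
    (p : X × Y → ℝ) (hp0 : ∀ z, 0 ≤ p z) (hp1 : ∑ z, p z = 1)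
    (f : X × Y → ℝ) :
    ∑ z, p z * (f z -
        Real.log (∑ x, (∑ y, p (x, y)) * Real.exp (f (x, z.2)))) ≤
      ∑ z ∈ Finset.univ.filter (fun z => 0 < p z),
        p z * Real.log (p z / ((∑ y, p (z.1, y)) * (∑ x, p (x, z.2)))) := by
  exact ba_aux p (fun x => ∑ y, p (x, y)) (fun y => ∑ x, p (x, y))
    (fun y => ∑ x, (∑ y', p (x, y')) * Real.exp (f (x, y))) f hp0 hp1
    (fun _ => rfl) (fun _ => rfl) (fun _ => rfl)
end

section
/- Let X and Y be finite nonempty types and let p : X × Y → ℝ be a probability mass function (p ≥ 0 and ∑_{x,y} p(x,y) = 1), with marginals p_X(x) = ∑_y p(x,y) and p_Y(y) = ∑_x p(x,y), and mutual information I(X;Y) = ∑_{(x,y) : p(x,y) > 0} p(x,y) · log( p(x,y) / (p_X(x) · p_Y(y)) ). Let f : X × Y → ℝ be any function and define Z(y) = ∑_x p_X(x) · exp(f(x,y)). Then I(X;Y) ≥ ∑_{x,y} p(x,y) · f(x,y) − (1/e) · ∑_y p_Y(y) · Z(y), where e is Euler's number. (This is the Nguyen–Wainwright–Jordan lower bound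 on mutual information.) -/
open scoped BigOperators

lemma log_le_div_e {u : ℝ} (hu : 0 < u) : Real.log u ≤ u / Real.exp 1 := by
  have h := Real.log_le_sub_one_of_pos (div_pos hu (Real.exp_pos 1))
  rw [Real.log_div (ne_of_gt hu) (ne_of_gt (Real.exp_pos 1)), Real.log_exp] at h
  linarith

/-- The Nguyen–Wainwright–Jordan lower bound on mutual information (finite case):
`I(X;Y) ≥ E_p[f] - (1/e) E_{p_Y}[Z(y)]` where `Z(y) = ∑ₓ p_X(x) exp (f (x, y))`. -/
theorem nwj_lower_bound (X Y : Type*) [Fintype X] [Fintype Y]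
    [Nonempty X] [Nonempty Y]
    (p : X × Y → ℝ) (hp0 : ∀ z, 0 ≤ p z) (hp1 : ∑ z, p z = 1)
    (f : X × Y → ℝ) :
    (∑ z, p z * f z) -
        (1 / Real.exp 1) *
          ∑ y, (∑ x, p (x, y)) * (∑ x, (∑ y', p (x, y')) * Real.exp (f (x, y))) ≤
      ∑ z ∈ Finset.univ.filter (fun z => 0 < p z),
        p z * Real.log (p z / ((∑ y, p (z.1, y)) * (∑ x, p (x, z.2)))) := by
  set pX : X → ℝ := fun x => ∑ y, p (x, y) with hpXdef
  set pY : Y → ℝ := fun y => ∑ x, p (x, y) with hpYdef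
  have hpX0 : ∀ x, 0 ≤ pX x := fun x => Finset.sum_nonneg fun y _ => hp0 _
  have hpY0 : ∀ y, 0 ≤ pY y := fun y => Finset.sum_nonneg fun x _ => hp0 _
  set g : X × Y → ℝ := fun z => pX z.1 * pY z.2 * Real.exp (f z) with hgdef
  have hg0 : ∀ z, 0 ≤ g z := fun z =>
    mul_nonneg (mul_nonneg (hpX0 _) (hpY0 _)) (Real.exp_pos _).le
  -- rewrite the double sum
  have hdouble : ∑ y, pY y * (∑ x, pX x * Real.exp (f (x, y))) = ∑ z, g z := by
    rw [Fintype.sum_prod_type_right]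
    refine Finset.sum_congr rfl fun y _ => ?_
    rw [Finset.mul_sum]
    refine Finset.sum_congr rfl fun x _ => ?_
    ring
  -- restrict the expectation sum to the support
  have hEf : ∑ z, p z * f z
      = ∑ z ∈ Finset.univ.filter (fun z => 0 < p z), p z * f z := by
    symm
    apply Finset.sum_filter_of_ne
    intro z _ hne
    rcases lt_or_eq_of_le (hp0 z) with h | h
    · exact h
    · exact absurd (by rw [← h, zero_mul]) hne
  rw [hEf, hdouble, sub_le_iff_le_add]
  calc ∑ z ∈ Finset.univ.filter (fun z => 0 < p z), p z * f z
      ≤ ∑ z ∈ Finset.univ.filter (fun z => 0 < p z),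
          (p z * Real.log (p z / (pX z.1 * pY z.2)) + (1 / Real.exp 1) * g z) := by
        refine Finset.sum_le_sum fun z hz => ?_
        have hpz : 0 < p z := (Finset.mem_filter.mp hz).2
        have hXpos : 0 < pX z.1 := by
          refine lt_of_lt_of_le hpz ?_
          have : p (z.1, z.2) ≤ ∑ y, p (z.1, y) :=
            Finset.single_le_sum (fun y _ => hp0 _) (Finset.mem_univ z.2)
          simpa using this
        have hYpos : 0 < pY z.2 := by
          refine lt_of_lt_of_le hpz ?_
          have : p (z.1, z.2) ≤ ∑ x, p (x, z.2) :=
            Finset.single_le_sum (f := fun x => p (x, z.2)) (fun x _ => hp0 _)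
              (Finset.mem_univ z.1)
          simpa using this
        have hupos : 0 < g z / p z := div_pos
          (mul_pos (mul_pos hXpos hYpos) (Real.exp_pos _)) hpz
        have hlog : Real.log (g z / p z) ≤ g z / p z / Real.exp 1 :=
          log_le_div_e hupos
        have hlogeq : Real.log (g z / p z)
            = f z - Real.log (p z / (pX z.1 * pY z.2)) := by
          rw [hgdef]
          rw [Real.log_div (by positivity) (ne_of_gt hpz),
            Real.log_mul (by positivity) (ne_of_gt (Real.exp_pos _)),
            Real.log_exp,
            Real.log_div (ne_of_gt hpz) (by positivity)]
          ring
        have hmul : p z * Real.log (g z / p z) ≤ p z * (g z / p z / Real.exp 1) :=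
          mul_le_mul_of_nonneg_left hlog hpz.le
        rw [hlogeq] at hmul
        have : p z * (g z / p z / Real.exp 1) = (1 / Real.exp 1) * g z := by
          field_simp
        rw [this] at hmul
        linarith [hmul]
    _ ≤ ∑ z ∈ Finset.univ.filter (fun z => 0 < p z),
          p z * Real.log (p z / (pX z.1 * pY z.2))
        + (1 / Real.exp 1) * ∑ z, g z := by
        rw [Finset.sum_add_distrib, ← Finset.mul_sum]
        have hsub : ∑ z ∈ Finset.univ.filter (fun z => 0 < p z), g z ≤ ∑ z, g z :=
          Finset.sum_le_sum_of_subset_of_nonneg (Finset.filter_subset _ _)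
            (fun z _ _ => hg0 z)
        have := mul_le_mul_of_nonneg_left hsub
          (by positivity : (0:ℝ) ≤ 1 / Real.exp 1)
        linarith
end

section
/- Let X and Y be finite nonempty types and let p : X × Y → ℝ be a probability mass function (p ≥ 0 and ∑_{x,y} p(x,y) = 1), with marginals p_X(x) = ∑_y p(x,y) and p_Y(y) = ∑_x p(x,y), and mutual information I(X;Y) = ∑_{(x,y) : p(x,y) > 0} p(x,y) · log( p(x,y) / (p_X(x) · p_Y(y)) ). Let f : X × Y → ℝ be any function and let K ≥ 1 be a natural number. Then I(X;Y) ≥ ∑_{(x,y₁)} p(x,y₁) · ( f(x,y₁) − ∑_{(y₂,…,y_K) ∈ Y^{K−1}} ( ∏_{j=2}^{K} p_Y(y_j) ) · log( (1/K) ∑_{j=1}^{K} exp(f(x,y_j)) ) ). That is, mutual information is lower bounded by the InfoNCE estimator with K − 1 independent negative samples drawn from the marginal p_Y. -/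
open scoped BigOperators

open Finset

/-- Symmetry: swapping the positive sample with the `j`-th negative sample. -/
private lemma swap_sum_aux {Y : Type*} [Fintype Y] [DecidableEq Y]
    (q c : Y → ℝ) {m : ℕ} (j : Fin m) :
    ∑ w : Y × (Fin m → Y),
        (q w.1 * ∏ i, q (w.2 i)) * (c (w.2 j) / (c w.1 + ∑ i, c (w.2 i)))
      = ∑ w : Y × (Fin m → Y),
        (q w.1 * ∏ i, q (w.2 i)) * (c w.1 / (c w.1 + ∑ i, c (w.2 i))) := by
  refine (Fintype.sum_bijective
    (fun w : Y × (Fin m → Y) => (w.2 j, Function.update w.2 j w.1)) ?_ _ _ ?_).symm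
  · apply Function.Involutive.bijective
    rintro ⟨y, ys⟩
    simp [Function.update_idem, Function.update_eq_self]
  · rintro ⟨y, ys⟩
    dsimp only
    have hprodu : ∏ i, q (Function.update ys j y i)
        = q y * ∏ i ∈ univ.erase j, q (ys i) := by
      rw [← Finset.mul_prod_erase univ (fun i => q (Function.update ys j y i)) (mem_univ j)]
      rw [Function.update_self]
      congr 1
      exact Finset.prod_congr rfl fun i hi => by
        rw [Function.update_of_ne (Finset.mem_erase.1 hi).1]
    have hsumu : ∑ i, c (Function.update ys j y i)
        = c y + ∑ i ∈ univ.erase j, c (ys i) := by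
      rw [← Finset.add_sum_erase univ (fun i => c (Function.update ys j y i)) (mem_univ j)]
      rw [Function.update_self]
      congr 1
      exact Finset.sum_congr rfl fun i hi => by
        rw [Function.update_of_ne (Finset.mem_erase.1 hi).1]
    have hprod : ∏ i, q (ys i) = q (ys j) * ∏ i ∈ univ.erase j, q (ys i) :=
      (Finset.mul_prod_erase univ (fun i => q (ys i)) (mem_univ j)).symm
    have hsum : ∑ i, c (ys i) = c (ys j) + ∑ i ∈ univ.erase j, c (ys i) :=
      (Finset.add_sum_erase univ (fun i => c (ys i)) (mem_univ j)).symm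
    rw [hprodu, hsumu, hprod, hsum, Function.update_self]
    ring

/-- Sum over the tuple of the distribution weights is one. -/
private lemma prod_sum_one {Y : Type*} [Fintype Y] (q : Y → ℝ) (m : ℕ)
    (hq1 : ∑ y, q y = 1) :
    ∑ ys : Fin m → Y, ∏ i, q (ys i) = 1 := by
  classical
  rw [← Fintype.piFinset_univ, ← Finset.prod_univ_sum]
  simp [hq1]

/-- Expectation of the softmax ratio under the product measure equals `1/(m+1)`. -/
private lemma expQ_eq {Y : Type*} [Fintype Y] (q c : Y → ℝ) (m : ℕ)
    (hq1 : ∑ y, q y = 1) (hc : ∀ y, 0 < c y) :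
    ∑ w : Y × (Fin m → Y),
      (q w.1 * ∏ i, q (w.2 i)) * (c w.1 / (c w.1 + ∑ i, c (w.2 i))) = 1 / (m + 1) := by
  classical
  set A := ∑ w : Y × (Fin m → Y),
      (q w.1 * ∏ i, q (w.2 i)) * (c w.1 / (c w.1 + ∑ i, c (w.2 i))) with hA
  have hT : ∀ w : Y × (Fin m → Y), 0 < c w.1 + ∑ i, c (w.2 i) := by
    intro w
    have : 0 ≤ ∑ i, c (w.2 i) := Finset.sum_nonneg fun i _ => (hc _).le
    linarith [hc w.1]
  have hw1 : ∑ w : Y × (Fin m → Y), (q w.1 * ∏ i, q (w.2 i)) = 1 := by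
    rw [Fintype.sum_prod_type]
    have : ∀ y : Y, ∑ ys : Fin m → Y, (q y * ∏ i, q (ys i)) = q y := by
      intro y
      rw [← Finset.mul_sum, prod_sum_one q m hq1, mul_one]
    rw [Finset.sum_congr rfl fun y _ => this y, hq1]
  have hmain : A + ∑ _j : Fin m, A = 1 := by
    have hswap : ∀ j : Fin m,
        ∑ w : Y × (Fin m → Y),
          (q w.1 * ∏ i, q (w.2 i)) * (c (w.2 j) / (c w.1 + ∑ i, c (w.2 i))) = A :=
      fun j => swap_sum_aux q c j
    have step : A + ∑ j : Fin m, A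
        = ∑ w : Y × (Fin m → Y),
            (q w.1 * ∏ i, q (w.2 i)) *
              ((c w.1 + ∑ i, c (w.2 i)) / (c w.1 + ∑ i, c (w.2 i))) := by
      conv_lhs => rw [hA, Finset.sum_congr rfl (fun j _ => (hswap j).symm)]
      rw [Finset.sum_comm, ← Finset.sum_add_distrib]
      refine Finset.sum_congr rfl fun w _ => ?_
      rw [← Finset.mul_sum, ← mul_add]
      congr 1
      rw [add_div, Finset.sum_div]
    rw [step]
    have : ∀ w : Y × (Fin m → Y),
        (q w.1 * ∏ i, q (w.2 i)) *
          ((c w.1 + ∑ i, c (w.2 i)) / (c w.1 + ∑ i, c (w.2 i)))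
        = q w.1 * ∏ i, q (w.2 i) := by
      intro w
      rw [div_self (hT w).ne', mul_one]
    rw [Finset.sum_congr rfl fun w _ => this w, hw1]
  have hm1 : (0:ℝ) < (m:ℝ) + 1 := by positivity
  have : A * ((m:ℝ) + 1) = 1 := by
    have := hmain
    simp only [Finset.sum_const, Finset.card_univ, Fintype.card_fin, nsmul_eq_mul] at this
    linarith [this]
  field_simp at this ⊢
  linarith [this]

/-- Gibbs-type variational inequality on a finite type. -/
private lemma gibbs_aux {W : Type*} [Fintype W] (P Q h : W → ℝ)
    (hP0 : ∀ w, 0 ≤ P w) (hP1 : ∑ w, P w = 1)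
    (hQ0 : ∀ w, 0 ≤ Q w)
    (hQpos : ∀ w, 0 < P w → 0 < Q w)
    (hh : ∀ w, 0 < h w)
    (hQh : ∑ w, Q w * h w ≤ 1) :
    ∑ w, P w * Real.log (h w) ≤
      ∑ w ∈ Finset.univ.filter (fun w => 0 < P w), P w * Real.log (P w / Q w) := by
  classical
  set F := Finset.univ.filter (fun w : W => 0 < P w) with hF
  have hPF : ∀ w ∈ F, 0 < P w := fun w hw => (Finset.mem_filter.1 hw).2
  have hsumF : ∑ w ∈ F, P w = 1 := by
    rw [hF, Finset.sum_filter_of_ne (fun w _ hne => lt_of_le_of_ne (hP0 w) (Ne.symm hne))]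
    exact hP1
  have hleft : ∑ w, P w * Real.log (h w) = ∑ w ∈ F, P w * Real.log (h w) := by
    rw [hF, Finset.sum_filter_of_ne]
    intro w _ hne
    by_contra hc
    push_neg at hc
    have : P w = 0 := le_antisymm hc (hP0 w)
    simp [this] at hne
  rw [hleft]
  have key : ∀ w ∈ F, P w * Real.log (h w)
      ≤ P w * Real.log (P w / Q w) + (Q w * h w - P w) := by
    intro w hw
    have hPw := hPF w hw
    have hQw := hQpos w hPw
    have hhw := hh w
    have hration : 0 < h w * Q w / P w := by positivity
    have hlog := Real.log_le_sub_one_of_pos hration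
    have hsplit : Real.log (h w) = Real.log (P w / Q w) + Real.log (h w * Q w / P w) := by
      rw [← Real.log_mul (by positivity) (by positivity)]
      congr 1
      field_simp
    rw [hsplit, mul_add]
    have h2 : P w * (h w * Q w / P w - 1) = Q w * h w - P w := by
      field_simp
    nlinarith [hlog, hPw]
  calc ∑ w ∈ F, P w * Real.log (h w)
      ≤ ∑ w ∈ F, (P w * Real.log (P w / Q w) + (Q w * h w - P w)) :=
        Finset.sum_le_sum key
    _ = ∑ w ∈ F, P w * Real.log (P w / Q w)
        + (∑ w ∈ F, Q w * h w - ∑ w ∈ F, P w) := by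
        rw [Finset.sum_add_distrib, Finset.sum_sub_distrib]
    _ ≤ ∑ w ∈ F, P w * Real.log (P w / Q w) := by
        have h1 : ∑ w ∈ F, Q w * h w ≤ ∑ w, Q w * h w :=
          Finset.sum_le_sum_of_subset_of_nonneg (Finset.filter_subset _ _)
            (fun w _ _ => mul_nonneg (hQ0 w) (hh w).le)
        linarith

private lemma main_aux {X Y : Type*} [Fintype X] [Fintype Y]
    (p : X × Y → ℝ) (pX : X → ℝ) (pY : Y → ℝ)
    (hpXd : ∀ x, pX x = ∑ y, p (x, y)) (hpYd : ∀ y, pY y = ∑ x, p (x, y))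
    (hp0 : ∀ z, 0 ≤ p z) (hp1 : ∑ z, p z = 1)
    (f : X × Y → ℝ) (K : ℕ) (hK : 1 ≤ K) :
    ∑ z : X × Y, p z * (f z -
        ∑ ys : Fin (K - 1) → Y, (∏ j, pY (ys j)) *
          Real.log ((1 / (K : ℝ)) *
            (Real.exp (f z) + ∑ j, Real.exp (f (z.1, ys j))))) ≤
      ∑ z ∈ Finset.univ.filter (fun z => 0 < p z),
        p z * Real.log (p z / (pX z.1 * pY z.2)) := by
  classical
  have hKR : (0:ℝ) < (K:ℝ) := by exact_mod_cast Nat.lt_of_lt_of_le Nat.zero_lt_one hK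
  have hpY0 : ∀ y, 0 ≤ pY y := fun y => (hpYd y) ▸ Finset.sum_nonneg fun x _ => hp0 _
  have hpX0 : ∀ x, 0 ≤ pX x := fun x => (hpXd x) ▸ Finset.sum_nonneg fun y _ => hp0 _
  have hpY1 : ∑ y, pY y = 1 := by
    simp only [hpYd]
    rw [Finset.sum_comm, ← Fintype.sum_prod_type]
    exact hp1
  have hpX1 : ∑ x, pX x = 1 := by
    simp only [hpXd]
    rw [← Fintype.sum_prod_type]
    exact hp1
  have hprod1 : ∑ ys : Fin (K - 1) → Y, ∏ j, pY (ys j) = 1 := prod_sum_one pY (K - 1) hpY1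
  have hprod0 : ∀ ys : Fin (K - 1) → Y, 0 ≤ ∏ j, pY (ys j) :=
    fun ys => Finset.prod_nonneg fun j _ => hpY0 _
  set P : (X × Y) × (Fin (K - 1) → Y) → ℝ :=
    fun w => p w.1 * ∏ j, pY (w.2 j) with hPdef
  set Q : (X × Y) × (Fin (K - 1) → Y) → ℝ :=
    fun w => (pX w.1.1 * pY w.1.2) * ∏ j, pY (w.2 j) with hQdef
  set h : (X × Y) × (Fin (K - 1) → Y) → ℝ :=
    fun w => Real.exp (f w.1) /
      ((1 / (K : ℝ)) * (Real.exp (f w.1) + ∑ j, Real.exp (f (w.1.1, w.2 j)))) with hhdef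
  have hSpos : ∀ (z : X × Y) (ys : Fin (K - 1) → Y),
      0 < (1 / (K : ℝ)) * (Real.exp (f z) + ∑ j, Real.exp (f (z.1, ys j))) := by
    intro z ys
    apply mul_pos (by positivity)
    positivity
  -- basic properties of P, Q, h
  have hP0 : ∀ w, 0 ≤ P w := fun w => mul_nonneg (hp0 _) (hprod0 _)
  have hQ0 : ∀ w, 0 ≤ Q w := fun w =>
    mul_nonneg (mul_nonneg (hpX0 _) (hpY0 _)) (hprod0 _)
  have hh : ∀ w, 0 < h w := fun w => div_pos (Real.exp_pos _) (hSpos _ _)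
  have hP1 : ∑ w, P w = 1 := by
    simp only [hPdef]
    rw [Fintype.sum_prod_type]
    have : ∀ z : X × Y, ∑ ys : Fin (K - 1) → Y, p z * ∏ j, pY (ys j) = p z := by
      intro z
      rw [← Finset.mul_sum, hprod1, mul_one]
    rw [Finset.sum_congr rfl fun z _ => this z]
    exact hp1
  have hQpos : ∀ w, 0 < P w → 0 < Q w := by
    intro w hw
    simp only [hPdef] at hw
    have hz : 0 < p w.1 := by
      rcases lt_or_eq_of_le (hp0 w.1) with h1 | h1
      · exact h1
      · exfalso; rw [← h1, zero_mul] at hw; exact lt_irrefl 0 hw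
    have hys : 0 < ∏ j, pY (w.2 j) := by
      rcases lt_or_eq_of_le (hprod0 w.2) with h1 | h1
      · exact h1
      · exfalso; rw [← h1, mul_zero] at hw; exact lt_irrefl 0 hw
    have hx : 0 < pX w.1.1 := by
      rw [hpXd]
      exact lt_of_lt_of_le hz (Finset.single_le_sum (fun y _ => hp0 (w.1.1, y)) (Finset.mem_univ w.1.2))
    have hy : 0 < pY w.1.2 := by
      rw [hpYd]
      exact lt_of_lt_of_le hz (Finset.single_le_sum (fun x _ => hp0 (x, w.1.2)) (Finset.mem_univ w.1.1))
    exact mul_pos (mul_pos hx hy) hys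
  have hEQ : ∑ w, Q w * h w = 1 := by
    simp only [hQdef, hhdef]
    rw [Fintype.sum_prod_type, Fintype.sum_prod_type]
    dsimp only
    have hx : ∀ x : X,
        ∑ y : Y, ∑ ys : Fin (K - 1) → Y,
          (pX x * pY y * ∏ j, pY (ys j)) *
            (Real.exp (f (x, y)) / (1 / (K:ℝ) * (Real.exp (f (x, y)) + ∑ j, Real.exp (f (x, ys j)))))
        = pX x := by
      intro x
      have base := expQ_eq pY (fun y => Real.exp (f (x, y))) (K - 1) hpY1 (fun y => Real.exp_pos _)
      simp only [Fintype.sum_prod_type] at base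
      have hKm : ((K - 1 : ℕ) : ℝ) + 1 = (K : ℝ) := by
        have h1 : (K - 1) + 1 = K := Nat.sub_add_cancel hK
        exact_mod_cast congrArg (fun n : ℕ => (n : ℝ)) h1
      have hpt : ∀ (y : Y) (ys : Fin (K - 1) → Y),
          (pX x * pY y * ∏ j, pY (ys j)) *
            (Real.exp (f (x, y)) / (1 / (K:ℝ) * (Real.exp (f (x, y)) + ∑ j, Real.exp (f (x, ys j)))))
          = pX x * ((K:ℝ) * ((pY y * ∏ j, pY (ys j)) *
              (Real.exp (f (x, y)) / (Real.exp (f (x, y)) + ∑ j, Real.exp (f (x, ys j)))))) := by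
        intro y ys
        have hT : (0:ℝ) < Real.exp (f (x, y)) + ∑ j, Real.exp (f (x, ys j)) := by positivity
        rw [eq_comm]
        field_simp
      rw [Finset.sum_congr rfl fun y _ => Finset.sum_congr rfl fun ys _ => hpt y ys]
      simp only [← Finset.mul_sum]
      rw [base, hKm, mul_one_div, div_self hKR.ne', mul_one]
    rw [Finset.sum_congr rfl fun x _ => hx x]
    exact hpX1
  have hL : ∑ w : (X × Y) × (Fin (K - 1) → Y), P w * Real.log (h w)
      = ∑ z : X × Y, p z * (f z -
          ∑ ys : Fin (K - 1) → Y, (∏ j, pY (ys j)) *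
            Real.log ((1 / (K : ℝ)) *
              (Real.exp (f z) + ∑ j, Real.exp (f (z.1, ys j))))) := by
    simp only [hPdef, hhdef]
    rw [Fintype.sum_prod_type]
    dsimp only
    refine Finset.sum_congr rfl fun z _ => ?_
    have hlog : ∀ ys : Fin (K - 1) → Y,
        Real.log (Real.exp (f z) /
          (1 / (K:ℝ) * (Real.exp (f z) + ∑ j, Real.exp (f (z.1, ys j)))))
        = f z - Real.log (1 / (K:ℝ) * (Real.exp (f z) + ∑ j, Real.exp (f (z.1, ys j)))) := by
      intro ys
      rw [Real.log_div (Real.exp_ne_zero _) (hSpos z ys).ne', Real.log_exp]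
    calc ∑ ys : Fin (K - 1) → Y, (p z * ∏ j, pY (ys j)) *
            Real.log (Real.exp (f z) /
              (1 / (K:ℝ) * (Real.exp (f z) + ∑ j, Real.exp (f (z.1, ys j)))))
        = ∑ ys : Fin (K - 1) → Y, (p z * f z * (∏ j, pY (ys j)) -
            p z * ((∏ j, pY (ys j)) *
              Real.log (1 / (K:ℝ) * (Real.exp (f z) + ∑ j, Real.exp (f (z.1, ys j)))))) := by
          refine Finset.sum_congr rfl fun ys _ => ?_
          rw [hlog ys]; ring
      _ = p z * (f z - ∑ ys : Fin (K - 1) → Y, (∏ j, pY (ys j)) *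
            Real.log (1 / (K:ℝ) * (Real.exp (f z) + ∑ j, Real.exp (f (z.1, ys j))))) := by
          rw [Finset.sum_sub_distrib, ← Finset.mul_sum, ← Finset.mul_sum, hprod1]
          ring
  have hR : ∑ w ∈ Finset.univ.filter (fun w => 0 < P w), P w * Real.log (P w / Q w)
      = ∑ z ∈ Finset.univ.filter (fun z => 0 < p z),
          p z * Real.log (p z / (pX z.1 * pY z.2)) := by
    rw [Finset.sum_filter, Finset.sum_filter, Fintype.sum_prod_type]
    refine Finset.sum_congr rfl fun z _ => ?_
    have hpt : ∀ ys : Fin (K - 1) → Y,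
        (if 0 < P (z, ys) then P (z, ys) * Real.log (P (z, ys) / Q (z, ys)) else 0)
        = (∏ j, pY (ys j)) *
            (if 0 < p z then p z * Real.log (p z / (pX z.1 * pY z.2)) else 0) := by
      intro ys
      by_cases hz : 0 < p z
      · by_cases hys : 0 < ∏ j, pY (ys j)
        · have hPw : 0 < P (z, ys) := by
            simp only [hPdef]; exact mul_pos hz hys
          rw [if_pos hPw, if_pos hz]
          have hPQ : P (z, ys) / Q (z, ys) = p z / (pX z.1 * pY z.2) := by
            simp only [hPdef, hQdef]
            exact mul_div_mul_right _ _ hys.ne'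
          rw [hPQ]
          simp only [hPdef]
          ring
        · have h0 : ∏ j, pY (ys j) = 0 := le_antisymm (le_of_not_gt hys) (hprod0 ys)
          have hPw : ¬ 0 < P (z, ys) := by
            simp only [hPdef]; rw [h0, mul_zero]; exact lt_irrefl 0
          rw [if_neg hPw, h0, zero_mul]
      · have hz0 : p z = 0 := le_antisymm (le_of_not_gt hz) (hp0 z)
        have hPw : ¬ 0 < P (z, ys) := by
          simp only [hPdef]; rw [hz0, zero_mul]; exact lt_irrefl 0
        rw [if_neg hPw, if_neg hz, mul_zero]
    rw [Finset.sum_congr rfl fun ys _ => hpt ys, ← Finset.sum_mul, hprod1, one_mul]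
  have final := gibbs_aux P Q h hP0 hP1 hQ0 hQpos hh (le_of_eq hEQ)
  rw [hL, hR] at final
  exact final


/-- InfoNCE with `K - 1` i.i.d. negative samples from the marginal `p_Y` lower bounds
mutual information (finite case). -/
theorem infonce_le_mutual_information (X Y : Type*) [Fintype X] [Fintype Y]
    [Nonempty X] [Nonempty Y]
    (p : X × Y → ℝ) (hp0 : ∀ z, 0 ≤ p z) (hp1 : ∑ z, p z = 1)
    (f : X × Y → ℝ) (K : ℕ) (hK : 1 ≤ K) :
    ∑ z : X × Y, p z * (f z -
        ∑ ys : Fin (K - 1) → Y, (∏ j, ∑ x, p (x, ys j)) *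
          Real.log ((1 / (K : ℝ)) *
            (Real.exp (f z) + ∑ j, Real.exp (f (z.1, ys j))))) ≤
      ∑ z ∈ Finset.univ.filter (fun z => 0 < p z),
        p z * Real.log (p z / ((∑ y, p (z.1, y)) * (∑ x, p (x, z.2)))) := by
  exact main_aux p (fun x => ∑ y, p (x, y)) (fun y => ∑ x, p (x, y))
    (fun _ => rfl) (fun _ => rfl) hp0 hp1 f K hK
end

section
/- Let X and Y be finite nonempty types, let p_X : X → ℝ and p_Y : Y → ℝ be probability mass functions (nonnegative and summing to 1), let f : X × Y → ℝ be any function, and let K ≥ 1 be a natural number. Then ∑_{x} p_X(x) · ∑_{(y₁,…,y_K) ∈ Y^K} ( ∏_{i=1}^{K} p_Y(y_i) ) · exp(f(x,y₁)) / ( (1/K) ∑_{i=1}^{K} exp(f(x,y_i)) ) = 1. That is, when all K samples y₁,…,y_K are drawn i.i.d. from p_Y independently of x, the expectation of exp(f(x,y₁)) divided by the Monte Carlo average (1/K) ∑_i exp(f(x,y_i)) equals exactly 1. -/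
open scoped BigOperators

lemma infonce_aux {Y : Type*} [Fintype Y] (pY : Y → ℝ) (g : Y → ℝ)
    (K : ℕ) (hK : 1 ≤ K) (hg : ∀ y, 0 < g y) (hpY1 : ∑ y, pY y = 1) :
    ∑ ys : Fin K → Y, (∏ i, pY (ys i)) *
        (g (ys ⟨0, hK⟩) / ((1 / (K : ℝ)) * ∑ i, g (ys i))) = 1 := by
  have hKpos : (0:ℝ) < K := by exact_mod_cast hK
  set S : Fin K → ℝ := fun j => ∑ ys : Fin K → Y, (∏ i, pY (ys i)) *
        (g (ys j) / ((1 / (K : ℝ)) * ∑ i, g (ys i))) with hS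
  have hSeq : ∀ j, S j = S ⟨0, hK⟩ := by
    intro j
    simp only [hS]
    refine Fintype.sum_equiv (Equiv.arrowCongr (Equiv.swap j ⟨0, hK⟩) (Equiv.refl Y))
      _ _ (fun ys => ?_)
    simp only [Equiv.arrowCongr_apply, Equiv.refl_symm, Equiv.coe_refl, Function.comp]
    congr 1
    · exact Fintype.prod_equiv (Equiv.swap j ⟨0, hK⟩).symm _ _ (fun i => by simp)
    · congr 1
      · simp [Equiv.swap_apply_left]
      · congr 1
        exact Fintype.sum_equiv (Equiv.swap j ⟨0, hK⟩).symm _ _ (fun i => by simp)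
  have hsum : ∑ j, S j = K := by
    simp only [hS]
    rw [Finset.sum_comm]
    have : ∀ ys : Fin K → Y,
        ∑ j : Fin K, (∏ i, pY (ys i)) * (g (ys j) / ((1 / (K : ℝ)) * ∑ i, g (ys i)))
        = (∏ i, pY (ys i)) * K := by
      intro ys
      have hd : (0:ℝ) < ∑ i, g (ys i) :=
        Finset.sum_pos (fun i _ => hg _) (by simp [Finset.univ_nonempty_iff]; exact ⟨⟨0, hK⟩⟩)
      rw [← Finset.mul_sum, ← Finset.sum_div]
      congr 1
      rw [div_eq_iff (by positivity)]
      field_simp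
    rw [Finset.sum_congr rfl (fun ys _ => this ys), ← Finset.sum_mul]
    have : ∑ ys : Fin K → Y, ∏ i, pY (ys i) = 1 := by
      rw [← Fintype.sum_pow, hpY1, one_pow]
    rw [this, one_mul]
  have : (K : ℝ) * S ⟨0, hK⟩ = K := by
    calc (K:ℝ) * S ⟨0, hK⟩ = ∑ _j : Fin K, S ⟨0, hK⟩ := by
          rw [Finset.sum_const, Finset.card_univ, Fintype.card_fin, nsmul_eq_mul]
      _ = ∑ j : Fin K, S j := Finset.sum_congr rfl (fun j _ => (hSeq j).symm)
      _ = K := hsum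
  exact mul_left_cancel₀ (ne_of_gt hKpos) (by rw [mul_one]; exact this)

/-- Exchangeability identity in the proof of the InfoNCE bound: when `y₁, …, y_K` are
drawn i.i.d. from `p_Y` independently of `x`, the expectation of
`exp (f (x, y₁)) / ((1/K) ∑ᵢ exp (f (x, yᵢ)))` equals exactly `1`. -/
theorem infonce_exchangeability_identity (X Y : Type*) [Fintype X] [Fintype Y]
    [Nonempty X] [Nonempty Y]
    (pX : X → ℝ) (hpX0 : ∀ x, 0 ≤ pX x) (hpX1 : ∑ x, pX x = 1)
    (pY : Y → ℝ) (hpY0 : ∀ y, 0 ≤ pY y) (hpY1 : ∑ y, pY y = 1)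
    (f : X × Y → ℝ) (K : ℕ) (hK : 1 ≤ K) :
    ∑ x : X, pX x *
        ∑ ys : Fin K → Y, (∏ i, pY (ys i)) *
          (Real.exp (f (x, ys ⟨0, hK⟩)) /
            ((1 / (K : ℝ)) * ∑ i, Real.exp (f (x, ys i)))) = 1 := by
  have h : ∀ x : X, ∑ ys : Fin K → Y, (∏ i, pY (ys i)) *
          (Real.exp (f (x, ys ⟨0, hK⟩)) /
            ((1 / (K : ℝ)) * ∑ i, Real.exp (f (x, ys i)))) = 1 := fun x =>
    infonce_aux pY (fun y => Real.exp (f (x, y))) K hK (fun y => Real.exp_pos _) hpY1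
  simp only [h, mul_one, hpX1]
end

section
/- Let X and Y be finite nonempty types and let p : X × Y → ℝ be a probability mass function (p ≥ 0 and ∑_{x,y} p(x,y) = 1), with marginals p_X(x) = ∑_y p(x,y) and p_Y(y) = ∑_x p(x,y), and mutual information I(X;Y) = ∑_{(x,y) : p(x,y) > 0} p(x,y) · log( p(x,y) / (p_X(x) · p_Y(y)) ). Let q : X × Y → ℝ satisfy q ≥ 0, ∑_x q(x,y) = 1 for every y ∈ Y, and q(x,y) > 0 whenever p(x,y) > 0. Then I(X;Y) = ∑_{(x,y) : p(x,y) > 0} p(x,y) · log( q(x,y) / p_X(x) ) + ∑_{y : p_Y(y) > 0} p_Y(y) · ( ∑_{x : p(x,y) > 0} ( p(x,y) / p_Y(y) ) · log( ( p(x,y) / p_Y(y) ) / q(x,y) ) ), i.e., mutual information decomposes exactly as the Barber–Agakov bound plus the expected Kullback–Leibler divergence from the true conditional p(x|y) = p(x,y)/p_Y(y) to the variational conditional q(x|y). -/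
open scoped BigOperators

/-- Exact decomposition of mutual information as the Barber–Agakov bound plus the
expected KL divergence from the true conditional `p(x|y)` to the variational `q(x|y)`. -/
theorem mutual_information_eq_ba_plus_kl (X Y : Type*) [Fintype X] [Fintype Y]
    [Nonempty X] [Nonempty Y]
    (p : X × Y → ℝ) (hp0 : ∀ z, 0 ≤ p z) (hp1 : ∑ z, p z = 1)
    (q : X × Y → ℝ) (hq0 : ∀ z, 0 ≤ q z)
    (hq1 : ∀ y, ∑ x, q (x, y) = 1)
    (hqpos : ∀ z, 0 < p z → 0 < q z) :
    ∑ z ∈ Finset.univ.filter (fun z => 0 < p z),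
        p z * Real.log (p z / ((∑ y, p (z.1, y)) * (∑ x, p (x, z.2)))) =
      (∑ z ∈ Finset.univ.filter (fun z => 0 < p z),
          p z * Real.log (q z / ∑ y, p (z.1, y))) +
        ∑ y ∈ Finset.univ.filter (fun y => 0 < ∑ x, p (x, y)),
          (∑ x, p (x, y)) *
            ∑ x ∈ Finset.univ.filter (fun x => 0 < p (x, y)),
              (p (x, y) / ∑ x', p (x', y)) *
                Real.log ((p (x, y) / ∑ x', p (x', y)) / q (x, y)) := by
  classical
  -- pY positive whenever p (x,y) > 0
  have hpYpos : ∀ x y, 0 < p (x, y) → 0 < ∑ x', p (x', y) := by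
    intro x y h
    exact lt_of_lt_of_le h (Finset.single_le_sum (fun i _ => hp0 (i, y)) (Finset.mem_univ x))
  have hpXpos : ∀ x y, 0 < p (x, y) → 0 < ∑ y', p (x, y') := by
    intro x y h
    exact lt_of_lt_of_le h (Finset.single_le_sum (fun i _ => hp0 (x, i)) (Finset.mem_univ y))
  rw [Finset.sum_filter, Finset.sum_filter, Finset.sum_filter]
  rw [Fintype.sum_prod_type, Fintype.sum_prod_type]
  conv_lhs => rw [Finset.sum_comm]
  conv_rhs => rw [Finset.sum_comm]
  rw [← Finset.sum_add_distrib]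
  refine Finset.sum_congr rfl fun y _ => ?_
  by_cases hY : 0 < ∑ x, p (x, y)
  · rw [if_pos hY, Finset.mul_sum, Finset.sum_filter, ← Finset.sum_add_distrib]
    refine Finset.sum_congr rfl fun x _ => ?_
    by_cases hx : 0 < p (x, y)
    · rw [if_pos hx, if_pos hx, if_pos hx]
      have hq := hqpos (x, y) hx
      have hX := hpXpos x y hx
      rw [Real.log_div hx.ne' (mul_ne_zero hX.ne' hY.ne'),
        Real.log_div hq.ne' hX.ne',
        Real.log_div (div_pos hx hY).ne' hq.ne',
        Real.log_mul hX.ne' hY.ne', Real.log_div hx.ne' hY.ne']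
      field_simp
      ring
    · simp [hx]
  · rw [if_neg hY]
    have hY' : ∑ x, p (x, y) = 0 :=
      le_antisymm (not_lt.1 hY) (Finset.sum_nonneg fun i _ => hp0 (i, y))
    have hall : ∀ x, p (x, y) = 0 := by
      intro x
      have := (Finset.sum_eq_zero_iff_of_nonneg (fun i _ => hp0 (i, y))).1 hY' x (Finset.mem_univ x)
      simpa using this
    simp [hall]
end
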